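/- Let H1,…,Hk be pairwise non-isomorphic finite digraphs and c1,…,ck nonzero real constants. Then there exist finite digraphs F1,…,Fk such that the k×k matrix M with entries M_{i,j} = c_j · hom(H_j, F_i) is invertible. -/

import Mathlib

/-- Number of digraph homomorphisms from `A` to `B`. -/
noncomputable def homCount {α β : Type*} (A : α → α → Prop) (B : β → β → Prop) : ℕ :=
  Nat.card {f : α → β // ∀ u v, A u v → B (f u) (f v)}

open Finset

/-- surjective hom count -/
noncomputable def surCount {α β : Type*} (A : α → α → Prop) (B : β → β → Prop) : ℕ :=
  Nat.card {f : α → β // (∀ u v, A u v → B (f u) (f v)) ∧ Function.Surjective f}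

lemma surCount_congr_right {α β γ : Type*} (A : α → α → Prop) {B : β → β → Prop}
    {C : γ → γ → Prop} (e : β ≃ γ) (h : ∀ b₁ b₂, B b₁ b₂ ↔ C (e b₁) (e b₂)) :
    surCount A B = surCount A C := by
  refine Nat.card_congr ?_
  refine ⟨fun f => ⟨fun a => e (f.1 a), fun u v huv => (h _ _).1 (f.2.1 u v huv),
      e.surjective.comp f.2.2⟩,
    fun f => ⟨fun a => e.symm (f.1 a), fun u v huv => (h _ _).2 (by simpa using f.2.1 u v huv),
      e.symm.surjective.comp f.2.2⟩, ?_, ?_⟩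
  · intro f; apply Subtype.ext; funext a; simp
  · intro f; apply Subtype.ext; funext a; simp

lemma natCard_sigma {ι : Type*} [Fintype ι] (f : ι → Type*) [∀ i, Finite (f i)] :
    Nat.card (Σ i, f i) = ∑ i, Nat.card (f i) := by
  letI : ∀ i, Fintype (f i) := fun i => Fintype.ofFinite _
  simp [Nat.card_eq_fintype_card]

lemma homCount_eq_sum_surCount {α β : Type*} [Fintype α] [Fintype β] [DecidableEq β]
    (A : α → α → Prop) (B : β → β → Prop) :
    homCount A B = ∑ S : Finset β, surCount A (fun a b : ↥S => B a.1 b.1) := by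
  classical
  rw [homCount]
  rw [Nat.card_congr (Equiv.sigmaFiberEquiv
    (fun f : {f : α → β // ∀ u v, A u v → B (f u) (f v)} => Finset.image f.1 univ)).symm]
  rw [natCard_sigma]
  refine Finset.sum_congr rfl fun S _ => ?_
  refine Nat.card_congr ?_
  refine ⟨fun x => ⟨fun a => ⟨x.1.1 a, by have h := mem_image_of_mem x.1.1 (mem_univ a); rw [x.2] at h; exact h⟩,
      fun u v huv => x.1.2 u v huv, ?_⟩,
    fun g => ⟨⟨fun a => (g.1 a).1, fun u v huv => g.2.1 u v huv⟩, ?_⟩, ?_, ?_⟩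
  · rintro ⟨b, hb⟩
    rw [← x.2] at hb
    obtain ⟨a, -, rfl⟩ := mem_image.1 hb
    exact ⟨a, rfl⟩
  · ext b
    simp only [mem_image, mem_univ, true_and]
    constructor
    · rintro ⟨a, rfl⟩; exact (g.1 a).2
    · intro hb
      obtain ⟨a, ha⟩ := g.2.2 ⟨b, hb⟩
      exact ⟨a, congrArg Subtype.val ha⟩
  · intro x; exact Subtype.ext (Subtype.ext rfl)
  · intro g; exact Subtype.ext (funext fun a => Subtype.ext rfl)

lemma sum_surCount_eq_zero {k : ℕ} (V : Fin k → Type) [∀ i, Fintype (V i)]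
    (R : ∀ i, V i → V i → Prop) (a : Fin k → ℝ)
    (hhom : ∀ (i : Fin k) (S : Finset (V i)),
      ∑ j, a j * (homCount (R j) (fun x y : ↥S => R i x.1 y.1) : ℝ) = 0)
    (i : Fin k) :
    ∀ S : Finset (V i),
      ∑ j, a j * (surCount (R j) (fun x y : ↥S => R i x.1 y.1) : ℝ) = 0 := by
  classical
  intro S
  induction S using Finset.strongInduction with
  | _ S ih =>
    have h0 := hhom i S
    have hsplit : ∀ j, (homCount (R j) (fun x y : ↥S => R i x.1 y.1) : ℝ)
        = ∑ T : Finset ↥S,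
            (surCount (R j) (fun x y : ↥(T.map (Function.Embedding.subtype _)) =>
              R i x.1 y.1) : ℝ) := by
      intro j
      rw [homCount_eq_sum_surCount (R j) (fun x y : ↥S => R i x.1 y.1)]
      push_cast
      refine Finset.sum_congr rfl fun T _ => ?_
      congr 1
      have hbij : Function.Bijective (fun x : ↥T =>
          (⟨x.1.1, Finset.mem_map.2 ⟨x.1, x.2, rfl⟩⟩ :
            ↥(T.map (Function.Embedding.subtype (· ∈ S))))) := by
        constructor
        · intro x y h
          have h' := congrArg Subtype.val h
          exact Subtype.ext (Subtype.ext h')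
        · intro y
          obtain ⟨x, hxT, hx⟩ := Finset.mem_map.1 y.2
          exact ⟨⟨x, hxT⟩, Subtype.ext hx⟩
      exact surCount_congr_right (R j) (Equiv.ofBijective _ hbij) (fun b₁ b₂ => Iff.rfl)
    rw [Finset.sum_congr rfl (fun j _ => by rw [hsplit j])] at h0
    simp_rw [Finset.mul_sum] at h0
    rw [Finset.sum_comm] at h0
    -- outer sum over T : Finset ↥S
    have hzero : ∀ T : Finset ↥S, T ∈ (Finset.univ : Finset (Finset ↥S)) →
        T ≠ Finset.univ →
        ∑ j, a j * (surCount (R j) (fun x y : ↥(T.map (Function.Embedding.subtype _)) =>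
          R i x.1 y.1) : ℝ) = 0 := by
      intro T _ hT
      apply ih
      have : T.map (Function.Embedding.subtype (· ∈ S)) ⊂
          (Finset.univ : Finset ↥S).map (Function.Embedding.subtype (· ∈ S)) :=
        Finset.map_ssubset_map.2 (lt_of_le_of_ne (Finset.subset_univ T) hT)
      rwa [Finset.univ_eq_attach, Finset.attach_map_val] at this
    rw [Finset.sum_eq_single_of_mem (Finset.univ : Finset ↥S) (Finset.mem_univ _) hzero] at h0
    rw [show (Finset.univ : Finset ↥S).map (Function.Embedding.subtype (· ∈ S)) = S by
      rw [Finset.univ_eq_attach, Finset.attach_map_val]] at h0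
    exact h0

lemma coeffs_eq_zero {k : ℕ} (V : Fin k → Type) [∀ i, Fintype (V i)]
    (R : ∀ i, V i → V i → Prop)
    (hniso : ∀ i j, i ≠ j → ¬ ∃ g : V i ≃ V j, ∀ a b, R i a b ↔ R j (g a) (g b))
    (a : Fin k → ℝ)
    (hhom : ∀ (i : Fin k) (S : Finset (V i)),
      ∑ j, a j * (homCount (R j) (fun x y : ↥S => R i x.1 y.1) : ℝ) = 0) :
    a = 0 := by
  classical
  by_contra ha
  set supp := Finset.univ.filter (fun j => a j ≠ 0) with hsupp
  have hsuppne : supp.Nonempty := by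
    obtain ⟨j, hj⟩ := Function.ne_iff.1 ha
    exact ⟨j, Finset.mem_filter.2 ⟨Finset.mem_univ _, hj⟩⟩
  obtain ⟨i₀, hi₀, hmax⟩ := supp.exists_max_image (fun j => Fintype.card (V j)) hsuppne
  set supp' := supp.filter (fun j => Fintype.card (V j) = Fintype.card (V i₀)) with hsupp'
  have hne' : supp'.Nonempty := ⟨i₀, Finset.mem_filter.2 ⟨hi₀, rfl⟩⟩
  obtain ⟨i, hi, hmin⟩ :=
    supp'.exists_min_image (fun j => Nat.card {p : V j × V j // R j p.1 p.2}) hne'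
  have hsur := sum_surCount_eq_zero V R a hhom i Finset.univ
  have htrans : ∀ j, surCount (R j)
      (fun x y : ↥(Finset.univ : Finset (V i)) => R i x.1 y.1) = surCount (R j) (R i) :=
    fun j => surCount_congr_right (R j)
      (Equiv.subtypeUnivEquiv (fun x => Finset.mem_univ x)) (fun _ _ => Iff.rfl)
  simp_rw [htrans] at hsur
  have hvanish : ∀ j, j ≠ i → a j * (surCount (R j) (R i) : ℝ) = 0 := by
    intro j hj
    rcases eq_or_ne (a j) 0 with h | h
    · rw [h, zero_mul]
    have hjs : j ∈ supp := Finset.mem_filter.2 ⟨Finset.mem_univ _, h⟩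
    suffices hz : surCount (R j) (R i) = 0 by rw [hz]; simp
    by_contra hne
    obtain ⟨⟨f, hfhom, hfsur⟩⟩ := (Nat.card_ne_zero.1 hne).1
    have h1 : Fintype.card (V i) ≤ Fintype.card (V j) := Fintype.card_le_of_surjective f hfsur
    have h3 : Fintype.card (V i) = Fintype.card (V i₀) := (Finset.mem_filter.1 hi).2
    have hcard : Fintype.card (V j) = Fintype.card (V i) :=
      le_antisymm (h3 ▸ hmax j hjs) h1
    have hbij : Function.Bijective f :=
      (Fintype.bijective_iff_surjective_and_card f).2 ⟨hfsur, hcard⟩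
    have hjs' : j ∈ supp' := Finset.mem_filter.2 ⟨hjs, hcard.trans h3⟩
    let φ : {p : V j × V j // R j p.1 p.2} → {p : V i × V i // R i p.1 p.2} :=
      fun p => ⟨(f p.1.1, f p.1.2), hfhom _ _ p.2⟩
    have hφinj : Function.Injective φ := by
      intro p q hpq
      have e1 := congrArg (fun x => x.1.1) hpq
      have e2 := congrArg (fun x => x.1.2) hpq
      exact Subtype.ext (Prod.ext (hbij.1 e1) (hbij.1 e2))
    have hedge : Nat.card {p : V j × V j // R j p.1 p.2}
        = Nat.card {p : V i × V i // R i p.1 p.2} :=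
      le_antisymm (Nat.card_le_card_of_injective φ hφinj) (hmin j hjs')
    have hφbij : Function.Bijective φ :=
      (Nat.bijective_iff_injective_and_card φ).2 ⟨hφinj, hedge⟩
    refine hniso j i hj ⟨Equiv.ofBijective f hbij, fun u v =>
      ⟨fun huv => hfhom u v huv, fun huv => ?_⟩⟩
    obtain ⟨⟨⟨u', v'⟩, hu'v'⟩, hq⟩ := hφbij.2 ⟨(f u, f v), huv⟩
    have e1 : f u' = f u := congrArg (fun x => x.1.1) hq
    have e2 : f v' = f v := congrArg (fun x => x.1.2) hq
    have : u' = u := hbij.1 e1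
    subst this
    have : v' = v := hbij.1 e2
    subst this
    exact hu'v'
  rw [Finset.sum_eq_single i (fun j _ hj => hvanish j hj)
    (fun h => absurd (Finset.mem_univ i) h)] at hsur
  have hsne : (surCount (R i) (R i) : ℝ) ≠ 0 := by
    have : surCount (R i) (R i) ≠ 0 :=
      Nat.card_ne_zero.2 ⟨⟨⟨id, fun u v huv => huv, Function.surjective_id⟩⟩, inferInstance⟩
    exact_mod_cast this
  have hai : a i ≠ 0 := (Finset.mem_filter.1 (Finset.mem_filter.1 hi).1).2
  exact hai ((mul_eq_zero.1 hsur).resolve_right hsne)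

/-- For pairwise non-isomorphic finite digraphs `H₁,…,H_k` and nonzero reals
`c₁,…,c_k`, there exist finite digraphs `F₁,…,F_k` such that the matrix
`M_{i,j} = c_j · hom(H_j, F_i)` is invertible. -/
theorem exists_digraphs_hom_matrix_invertible (k : ℕ) (V : Fin k → Type)
    [∀ i, Fintype (V i)] (R : ∀ i, V i → V i → Prop)
    (hniso : ∀ i j, i ≠ j →
      ¬ ∃ g : V i ≃ V j, ∀ a b, R i a b ↔ R j (g a) (g b))
    (c : Fin k → ℝ) (hc : ∀ j, c j ≠ 0) :
    ∃ W : Fin k → Type, (∀ i, Finite (W i)) ∧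
      ∃ S : ∀ i, W i → W i → Prop,
        (Matrix.of fun i j : Fin k =>
          c j * (homCount (R j) (S i) : ℝ)).det ≠ 0 := by
  classical
  set v : (Σ i : Fin k, Finset (V i)) → (Fin k → ℝ) :=
    fun t j => (homCount (R j) (fun x y : ↥t.2 => R t.1 x.1 y.1) : ℝ) with hv
  have hspan : Submodule.span ℝ (Set.range v) = ⊤ := by
    by_contra hlt
    have hann : (Submodule.span ℝ (Set.range v)).dualAnnihilator ≠ ⊥ := by
      intro h0
      exact hlt (Subspace.dualAnnihilator_inj.1
        (h0.trans Submodule.dualAnnihilator_top.symm))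
    obtain ⟨φ, hφmem, hφne⟩ := Submodule.exists_mem_ne_zero_of_ne_bot hann
    set a : Fin k → ℝ := fun j => φ (fun j' => if j = j' then 1 else 0) with hadef
    have hφ : ∀ x : Fin k → ℝ, φ x = ∑ j, x j * a j := by
      intro x
      rw [LinearMap.pi_apply_eq_sum_univ φ x]
      simp [hadef, smul_eq_mul]
    have hhom : ∀ (i : Fin k) (S : Finset (V i)),
        ∑ j, a j * (homCount (R j) (fun x y : ↥S => R i x.1 y.1) : ℝ) = 0 := by
      intro i S
      have hx : φ (v ⟨i, S⟩) = 0 :=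
        (Submodule.mem_dualAnnihilator φ).1 hφmem _ (Submodule.subset_span ⟨⟨i, S⟩, rfl⟩)
      rw [hφ] at hx
      simpa [hv, mul_comm] using hx
    have haz : a = 0 := coeffs_eq_zero V R hniso a hhom
    apply hφne
    apply LinearMap.ext
    intro x
    rw [hφ, haz]
    simp
  obtain ⟨b, hb_sub, hb_span, hb_li⟩ := exists_linearIndependent ℝ (Set.range v)
  rw [hspan] at hb_span
  let B : Module.Basis b ℝ (Fin k → ℝ) :=
    Module.Basis.mk hb_li (by rw [Subtype.range_coe]; exact hb_span.ge)
  haveI : Fintype b := FiniteDimensional.fintypeBasisIndex B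
  have hcard : Fintype.card b = k := by
    have h1 := Module.finrank_eq_card_basis B
    rw [Module.finrank_pi, Fintype.card_fin] at h1
    exact h1.symm
  let e : b ≃ Fin k := Fintype.equivFinOfCardEq hcard
  have hchoose : ∀ r : Fin k, ∃ t, v t = ((e.symm r : b) : Fin k → ℝ) :=
    fun r => hb_sub (e.symm r).2
  choose t ht using hchoose
  have hrows : LinearIndependent ℝ (fun r : Fin k => v (t r)) := by
    have : (fun r : Fin k => v (t r)) = (fun x : b => (x : Fin k → ℝ)) ∘ e.symm := by
      funext r; exact ht r
    rw [this]
    exact hb_li.comp e.symm e.symm.injective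
  refine ⟨fun r => {x // x ∈ (t r).2}, fun r => inferInstance,
    fun r => (fun x y => R (t r).1 x.1 y.1), ?_⟩
  have hM : (Matrix.of fun r j : Fin k =>
      c j * (homCount (R j) (fun x y : {x // x ∈ (t r).2} => R (t r).1 x.1 y.1) : ℝ))
      = (Matrix.of fun r j : Fin k => v (t r) j) * Matrix.diagonal c := by
    ext r j
    simp [Matrix.mul_diagonal, hv, mul_comm]
  rw [hM, Matrix.det_mul, Matrix.det_diagonal]
  have h1 : (Matrix.of fun r j : Fin k => v (t r) j).det ≠ 0 := by
    have hU : IsUnit (Matrix.of fun r j : Fin k => v (t r) j) :=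
      Matrix.linearIndependent_rows_iff_isUnit.1 hrows
    exact ((Matrix.isUnit_iff_isUnit_det _).1 hU).ne_zero
  exact mul_ne_zero h1 (Finset.prod_ne_zero_iff.2 fun j _ => hc j)
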